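/- Let P : ℝⁿ → ℝ be a homogeneous polynomial of degree m ≥ 2 with P(ξ) > 0 for all ξ ≠ 0, and extend P to a polynomial on ℂⁿ. Then there exists a constant d₀ > 0 such that Re P(ξ − iη) ≥ −d₀ |η|^m for all ξ, η ∈ ℝⁿ. -/

import Mathlib

/-!
`F(ξ, η) = Re P(ξ − iη)` and `g(ξ, η) = |η|^m` are continuous and homogeneous of degree `m` on
`ℝⁿ × ℝⁿ`, so it suffices to prove `F ≥ −d₀ g` on the unit sphere. There `F` is bounded below,
and on the compact part of the sphere where `F ≤ 0` the function `g` cannot vanish, because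
`F(ξ, 0) = P(ξ) > 0`; hence `g` has a positive minimum `δ` there, and `d₀ = C/δ` works if `F ≥ −C` on the sphere.
-/

open MeasureTheory Complex
open scoped ENNReal RealInnerProductSpace

noncomputable section

/-- The Fourier transform `f̂(ξ) = ∫ e^{−ix·ξ} f(x) dx`. -/
def FT {n : ℕ} (f : EuclideanSpace ℝ (Fin n) → ℂ) (ξ : EuclideanSpace ℝ (Fin n)) : ℂ :=
  ∫ x, Complex.exp (-Complex.I * (⟪x, ξ⟫ : ℂ)) * f x

/-- The inverse Fourier transform `𝓕⁻¹g(x) = (2π)^{−n} ∫ e^{ix·ξ} g(ξ) dξ`. -/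
def IFT {n : ℕ} (g : EuclideanSpace ℝ (Fin n) → ℂ) (x : EuclideanSpace ℝ (Fin n)) : ℂ :=
  (((2 * Real.pi) ^ n : ℝ) : ℂ)⁻¹ * ∫ ξ, Complex.exp (Complex.I * (⟪x, ξ⟫ : ℂ)) * g ξ

/-- The determinant of the Hessian matrix `(∂²f/∂ξᵢ∂ξⱼ)` of `f` at `ξ`. -/
def HessDet {n : ℕ} (f : EuclideanSpace ℝ (Fin n) → ℝ) (ξ : EuclideanSpace ℝ (Fin n)) : ℝ :=
  Matrix.det (Matrix.of fun i j : Fin n =>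
    fderiv ℝ (fun y => fderiv ℝ f y (EuclideanSpace.single j 1)) ξ (EuclideanSpace.single i 1))

theorem MvPolynomial.IsHomogeneous.eval_mul_left {R σ : Type*} [CommSemiring R]
    {φ : MvPolynomial σ R} {m : ℕ} (hφ : φ.IsHomogeneous m) (c : R) (x : σ → R) :
    MvPolynomial.eval (fun i => c * x i) φ = c ^ m * MvPolynomial.eval x φ := by
  rw [MvPolynomial.eval_eq, MvPolynomial.eval_eq, Finset.mul_sum]
  refine Finset.sum_congr rfl fun d hd => ?_
  have hdeg : d.degree = m := by
    rw [Finsupp.degree_eq_weight_one]; exact hφ (MvPolynomial.mem_support_iff.mp hd)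
  simp_rw [mul_pow, Finset.prod_mul_distrib, Finset.prod_pow_eq_pow_sum]
  rw [show ∑ i ∈ d.support, d i = d.degree from rfl, hdeg]
  ring

theorem MvPolynomial.eval_ofReal_map {σ : Type*} (P : MvPolynomial σ ℝ) (x : σ → ℝ) :
    MvPolynomial.eval (fun i => (x i : ℂ)) (MvPolynomial.map (algebraMap ℝ ℂ) P) =
      MvPolynomial.eval x P := by
  rw [MvPolynomial.eval_map]
  exact (MvPolynomial.eval₂_comp_left (algebraMap ℝ ℂ) (RingHom.id ℝ) x P).symm

theorem IsCompact.exists_neg_mul_le {X : Type*} [TopologicalSpace X] {K : Set X}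
    (hK : IsCompact K) {F g : X → ℝ} (hF : Continuous F) (hg : Continuous g)
    (hg_nonneg : ∀ p ∈ K, 0 ≤ g p) (hF_pos : ∀ p ∈ K, g p = 0 → 0 < F p) :
    ∃ d > 0, ∀ p ∈ K, -(d * g p) ≤ F p := by
  obtain ⟨C, hC⟩ := hK.exists_bound_of_continuousOn hF.continuousOn
  have hL : IsCompact (K ∩ F ⁻¹' Set.Iic 0) := hK.inter_right (isClosed_Iic.preimage hF)
  obtain ⟨δ, hδ, hgδ⟩ := hL.exists_forall_le' hg.continuousOn (a := 0) fun p ⟨hpK, hFp⟩ =>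
    (hg_nonneg p hpK).lt_of_ne fun hgp => (hF_pos p hpK hgp.symm).not_ge hFp
  refine ⟨max C 1 / δ, by positivity, fun p hp => ?_⟩
  rcases le_or_gt (F p) 0 with hFp | hFp
  · have hgp : δ ≤ g p := hgδ p ⟨hp, hFp⟩
    have hCF : -F p ≤ C := (neg_le_abs _).trans (hC p hp)
    calc -(max C 1 / δ * g p) ≤ -(max C 1 / δ * δ) := by gcongr
      _ = -max C 1 := by field_simp
      _ ≤ F p := by linarith [le_max_left C 1]
  · have : 0 ≤ max C 1 / δ * g p := mul_nonneg (by positivity) (hg_nonneg p hp)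
    linarith

theorem exists_neg_mul_le_of_homogeneous {V : Type*} [NormedAddCommGroup V] [NormedSpace ℝ V]
    [ProperSpace V] {F g : V → ℝ} {m : ℕ} (hm : m ≠ 0) (hF : Continuous F) (hg : Continuous g)
    (hF_hom : ∀ t : ℝ, 0 ≤ t → ∀ p, F (t • p) = t ^ m * F p)
    (hg_hom : ∀ t : ℝ, 0 ≤ t → ∀ p, g (t • p) = t ^ m * g p)
    (hg_nonneg : ∀ p, 0 ≤ g p) (hF_pos : ∀ p ≠ 0, g p = 0 → 0 < F p) :
    ∃ d > 0, ∀ p, -(d * g p) ≤ F p := by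
  obtain ⟨d, hd, hdS⟩ := (isCompact_sphere (0 : V) 1).exists_neg_mul_le hF hg
    (fun p _ => hg_nonneg p) fun p hp => hF_pos p (Metric.ne_of_mem_sphere hp one_ne_zero)
  refine ⟨d, hd, fun p => ?_⟩
  rcases eq_or_ne p 0 with rfl | hp
  · have hF0 : F 0 = 0 := by simpa [zero_pow hm] using hF_hom 0 le_rfl 0
    have hg0 : g 0 = 0 := by simpa [zero_pow hm] using hg_hom 0 le_rfl 0
    simp [hF0, hg0]
  · have ht : 0 < ‖p‖ := norm_pos_iff.mpr hp
    have hq : ‖p‖⁻¹ • p ∈ Metric.sphere (0 : V) 1 := by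
      simp [norm_smul, ht.ne']
    have hpq : p = ‖p‖ • ‖p‖⁻¹ • p := by rw [smul_smul, mul_inv_cancel₀ ht.ne', one_smul]
    rw [hpq, hF_hom _ ht.le, hg_hom _ ht.le]
    have := mul_le_mul_of_nonneg_left (hdS _ hq) (pow_pos ht m).le
    linarith

section

variable {ι : Type*}

def reEvalSubI (P : MvPolynomial ι ℝ) (p : EuclideanSpace ℝ ι × EuclideanSpace ℝ ι) : ℝ :=
  (MvPolynomial.eval (fun i => (p.1 i : ℂ) - I * (p.2 i : ℂ))
    (MvPolynomial.map (algebraMap ℝ ℂ) P)).re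

theorem continuous_reEvalSubI (P : MvPolynomial ι ℝ) : Continuous (reEvalSubI P) :=
  continuous_re.comp ((MvPolynomial.continuous_eval _).comp (by fun_prop))

theorem reEvalSubI_smul {P : MvPolynomial ι ℝ} {m : ℕ} (hP : P.IsHomogeneous m) (t : ℝ)
    (p : EuclideanSpace ℝ ι × EuclideanSpace ℝ ι) :
    reEvalSubI P (t • p) = t ^ m * reEvalSubI P p := by
  have : (fun i => ((t • p).1 i : ℂ) - I * ((t • p).2 i : ℂ)) =
      fun i => (t : ℂ) * ((p.1 i : ℂ) - I * (p.2 i : ℂ)) := by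
    ext i; simp; ring
  rw [reEvalSubI, this, (hP.map _).eval_mul_left, ← ofReal_pow, re_ofReal_mul, reEvalSubI]

theorem reEvalSubI_zero_right (P : MvPolynomial ι ℝ) (ξ : EuclideanSpace ℝ ι) :
    reEvalSubI P (ξ, 0) = MvPolynomial.eval (fun i => ξ i) P := by
  have : (fun i => (ξ i : ℂ) - I * ((0 : EuclideanSpace ℝ ι) i : ℂ)) = fun i => (ξ i : ℂ) := by
    ext i; simp
  rw [reEvalSubI, this, MvPolynomial.eval_ofReal_map, ofReal_re]

end

theorem statement15_general
    (n m : ℕ) (hm : 2 ≤ m)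
    (P : MvPolynomial (Fin n) ℝ) (hhom : P.IsHomogeneous m)
    (hell : ∀ ξ : EuclideanSpace ℝ (Fin n), ξ ≠ 0 →
      0 < MvPolynomial.eval (fun i => ξ i) P) :
    ∃ d₀ : ℝ, 0 < d₀ ∧ ∀ ξ η : EuclideanSpace ℝ (Fin n),
      -(d₀ * ‖η‖ ^ m) ≤
        (MvPolynomial.eval (fun i => (ξ i : ℂ) - Complex.I * (η i : ℂ))
          (MvPolynomial.map (algebraMap ℝ ℂ) P)).re := by
  have hg_hom (t : ℝ) (ht : 0 ≤ t) (p : EuclideanSpace ℝ (Fin n) × EuclideanSpace ℝ (Fin n)) :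
      ‖(t • p).2‖ ^ m = t ^ m * ‖p.2‖ ^ m := by
    rw [Prod.smul_snd, norm_smul, Real.norm_of_nonneg ht, mul_pow]
  have hF_pos (p : EuclideanSpace ℝ (Fin n) × EuclideanSpace ℝ (Fin n)) (hp : p ≠ 0)
      (hη : ‖p.2‖ ^ m = 0) : 0 < reEvalSubI P p := by
    obtain ⟨ξ, η⟩ := p
    obtain rfl : η = 0 := norm_eq_zero.mp ((pow_eq_zero_iff (by omega)).mp hη)
    rw [reEvalSubI_zero_right]
    exact hell ξ (by simpa using hp)
  obtain ⟨d, hd, hdF⟩ := exists_neg_mul_le_of_homogeneous (by omega) (continuous_reEvalSubI P)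
    (by fun_prop) (fun t _ => reEvalSubI_smul hhom t) hg_hom (fun _ => by positivity) hF_pos
  exact ⟨d, hd, fun ξ η => hdF (ξ, η)⟩

/-- For a positive elliptic homogeneous polynomial `P` of degree `m`, there is `d₀ > 0`
with `Re P(ξ − iη) ≥ −d₀ |η|^m` for all real vectors `ξ, η`. -/
theorem statement15
    (n m : ℕ) (hn : 2 ≤ n) (hm : 2 ≤ m)
    (P : MvPolynomial (Fin n) ℝ) (hhom : P.IsHomogeneous m)
    (hell : ∀ ξ : EuclideanSpace ℝ (Fin n), ξ ≠ 0 →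
      0 < MvPolynomial.eval (fun i => ξ i) P) :
    ∃ d₀ : ℝ, 0 < d₀ ∧ ∀ ξ η : EuclideanSpace ℝ (Fin n),
      -(d₀ * ‖η‖ ^ m) ≤
        (MvPolynomial.eval (fun i => (ξ i : ℂ) - Complex.I * (η i : ℂ))
          (MvPolynomial.map (algebraMap ℝ ℂ) P)).re :=
  statement15_general n m hm P hhom hell
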